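/- For every finite simple graph G with m ≥ 1 edges and every partition P of its vertex set, the modularity satisfies −1/2 ≤ Q(P) ≤ 1. -/

import Mathlib

open Finset
open scoped Classical

noncomputable section

namespace HCSPaper

variable {V : Type*} [Fintype V] [DecidableEq V]

/-- The number of edges of a finite simple graph `G`. -/
def edgeCount (G : SimpleGraph V) : ℕ := G.edgeSet.ncard

/-- The degree `d(v)` of a vertex. -/
def deg (G : SimpleGraph V) (v : V) : ℕ := (G.neighborSet v).ncard

/-- The modularity `Q(P)` of a partition `P` of the vertex set of `G`:
`Q(P) = (1/(2m)) Σ_{u,v} [A_{u,v} − d(u)d(v)/(2m)] δ_P(u,v)`, the sum over ordered pairs. -/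
def Qmod (G : SimpleGraph V) (P : Finpartition (Finset.univ : Finset V)) : ℝ :=
  (1 / (2 * (edgeCount G : ℝ))) *
    ∑ u : V, ∑ v : V,
      ((if G.Adj u v then (1 : ℝ) else 0) -
          (deg G u : ℝ) * (deg G v : ℝ) / (2 * (edgeCount G : ℝ))) *
        (if ∃ t ∈ P.parts, u ∈ t ∧ v ∈ t then (1 : ℝ) else 0)

set_option linter.unusedSectionVars false

lemma deg_eq (G : SimpleGraph V) (v : V) : deg G v = G.degree v := by
  rw [deg, Set.ncard_eq_toFinset_card', SimpleGraph.degree]; congr 1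

lemma edgeCount_eq (G : SimpleGraph V) : edgeCount G = G.edgeFinset.card := by
  rw [edgeCount, Set.ncard_eq_toFinset_card']
  exact congrArg Finset.card (by ext; simp)

lemma sum_deg (G : SimpleGraph V) : ∑ v, (deg G v : ℝ) = 2 * (edgeCount G : ℝ) := by
  have := G.sum_degrees_eq_twice_card_edges
  push_cast [deg_eq, edgeCount_eq, this]
  norm_cast

def Aw (G : SimpleGraph V) (u v : V) : ℝ := if G.Adj u v then 1 else 0

lemma Aw_nonneg (G : SimpleGraph V) (u v : V) : 0 ≤ Aw G u v := by
  rw [Aw]; split <;> norm_num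

lemma Aw_symm (G : SimpleGraph V) (u v : V) : Aw G u v = Aw G v u := by
  simp [Aw, SimpleGraph.adj_comm]

lemma deg_eq_sum (G : SimpleGraph V) (u : V) : (deg G u : ℝ) = ∑ v, Aw G u v := by
  simp only [Aw]
  rw [deg_eq, SimpleGraph.degree, SimpleGraph.neighborFinset_eq_filter, Finset.sum_boole]

def Ein (G : SimpleGraph V) (t : Finset V) : ℝ := ∑ u ∈ t, ∑ v ∈ t, Aw G u v
def Dsum (G : SimpleGraph V) (t : Finset V) : ℝ := ∑ u ∈ t, (deg G u : ℝ)
def Eout (G : SimpleGraph V) (t : Finset V) : ℝ := Dsum G t - Ein G t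
def Bw (G : SimpleGraph V) (t s : Finset V) : ℝ := ∑ u ∈ t, ∑ v ∈ s, Aw G u v

lemma Ein_nonneg (G : SimpleGraph V) (t : Finset V) : 0 ≤ Ein G t :=
  Finset.sum_nonneg fun u _ => Finset.sum_nonneg fun v _ => Aw_nonneg G u v

lemma Bw_nonneg (G : SimpleGraph V) (t s : Finset V) : 0 ≤ Bw G t s :=
  Finset.sum_nonneg fun u _ => Finset.sum_nonneg fun v _ => Aw_nonneg G u v

lemma Bw_symm (G : SimpleGraph V) (t s : Finset V) : Bw G t s = Bw G s t := by
  rw [Bw, Bw, Finset.sum_comm]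
  exact Finset.sum_congr rfl fun u _ => Finset.sum_congr rfl fun v _ => Aw_symm G v u

lemma Ein_le_Dsum (G : SimpleGraph V) (t : Finset V) : Ein G t ≤ Dsum G t := by
  refine Finset.sum_le_sum fun u _ => ?_
  rw [deg_eq_sum]
  exact Finset.sum_le_sum_of_subset_of_nonneg (Finset.subset_univ t)
    fun v _ _ => Aw_nonneg G u v

lemma Eout_eq (G : SimpleGraph V) (t : Finset V) :
    Eout G t = ∑ u ∈ t, ∑ v ∈ univ \ t, Aw G u v := by
  rw [Eout, Dsum, Ein, ← Finset.sum_sub_distrib]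
  refine Finset.sum_congr rfl fun u _ => ?_
  rw [deg_eq_sum, ← Finset.sum_sdiff (Finset.subset_univ t)]
  ring

lemma part_sum (P : Finpartition (univ : Finset V)) (f : V → ℝ) :
    ∑ t ∈ P.parts, ∑ u ∈ t, f u = ∑ u, f u := by
  have h := Finset.sum_biUnion (f := f) (t := id) P.disjoint
  rw [P.biUnion_parts] at h
  exact (h.trans rfl).symm

lemma erase_biUnion (P : Finpartition (univ : Finset V)) {t : Finset V} (ht : t ∈ P.parts) :
    (P.parts.erase t).biUnion id = univ \ t := by
  ext x
  simp only [Finset.mem_biUnion, Finset.mem_sdiff, Finset.mem_univ, true_and, id,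
    Finset.mem_erase]
  constructor
  · rintro ⟨s, ⟨hst, hs⟩, hxs⟩
    intro hxt
    exact hst (P.eq_of_mem_parts hs ht hxs hxt)
  · intro hxt
    obtain ⟨s, hs, hxs⟩ := P.exists_mem (mem_univ x)
    exact ⟨s, ⟨fun h => hxt (h ▸ hxs), hs⟩, hxs⟩

lemma Eout_eq_sum_Bw (G : SimpleGraph V) (P : Finpartition (univ : Finset V))
    {t : Finset V} (ht : t ∈ P.parts) :
    Eout G t = ∑ s ∈ P.parts.erase t, Bw G t s := by
  rw [Eout_eq, ← erase_biUnion P ht]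
  rw [Finset.sum_comm (s := t)]
  rw [Finset.sum_biUnion (P.disjoint.subset (coe_subset.mpr (Finset.erase_subset _ _)))]
  rw [Finset.sum_congr rfl fun s _ => Finset.sum_comm]
  rfl

lemma Eout_half (G : SimpleGraph V) (P : Finpartition (univ : Finset V))
    {t : Finset V} (ht : t ∈ P.parts) :
    2 * Eout G t ≤ ∑ s ∈ P.parts, Eout G s := by
  have h1 : Eout G t ≤ ∑ s ∈ P.parts.erase t, Eout G s := by
    rw [Eout_eq_sum_Bw G P ht]
    refine Finset.sum_le_sum fun s hs => ?_
    have hs' : s ∈ P.parts := Finset.mem_of_mem_erase hs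
    have hts : t ∈ P.parts.erase s :=
      Finset.mem_erase.mpr ⟨fun h => (Finset.mem_erase.mp hs).1 h.symm, ht⟩
    rw [Eout_eq_sum_Bw G P hs', Bw_symm]
    exact Finset.single_le_sum (fun r _ => Bw_nonneg G s r) hts
  have h2 : Eout G t + ∑ s ∈ P.parts.erase t, Eout G s = ∑ s ∈ P.parts, Eout G s :=
    Finset.add_sum_erase _ _ ht
  linarith

lemma Dsum_total (G : SimpleGraph V) (P : Finpartition (univ : Finset V)) :
    ∑ t ∈ P.parts, Dsum G t = 2 * (edgeCount G : ℝ) := by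
  rw [show (∑ t ∈ P.parts, Dsum G t) = ∑ t ∈ P.parts, ∑ u ∈ t, (deg G u : ℝ) from rfl,
    part_sum, sum_deg]


lemma delta_eq (P : Finpartition (univ : Finset V)) (u v : V) :
    (if ∃ t ∈ P.parts, u ∈ t ∧ v ∈ t then (1:ℝ) else 0)
      = ∑ t ∈ P.parts, (if u ∈ t then (1:ℝ) else 0) * (if v ∈ t then 1 else 0) := by
  obtain ⟨t0, ht0, hu0⟩ := P.exists_mem (mem_univ u)
  rw [Finset.sum_eq_single t0]
  · by_cases hv : v ∈ t0
    · simp only [hu0, hv, if_pos, and_self, mul_one]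
      rw [if_pos ⟨t0, ht0, hu0, hv⟩]
    · simp only [hu0, hv, if_true, if_false, mul_zero]
      rw [if_neg]
      rintro ⟨t, ht, hut, hvt⟩
      exact hv ((P.eq_of_mem_parts ht ht0 hut hu0) ▸ hvt)
  · intro t ht hne
    rw [if_neg fun hut => hne (P.eq_of_mem_parts ht ht0 hut hu0), zero_mul]
  · intro h; exact absurd ht0 h

lemma indicator_sum (t : Finset V) (g : V → ℝ) :
    ∑ u : V, (if u ∈ t then (1:ℝ) else 0) * g u = ∑ u ∈ t, g u := by
  simp [ite_mul, Finset.sum_ite_mem]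

lemma Qmod_eq (G : SimpleGraph V) (P : Finpartition (univ : Finset V)) :
    Qmod G P = (1 / (2 * (edgeCount G : ℝ))) * ∑ t ∈ P.parts,
      ((∑ u ∈ t, ∑ v ∈ t, (if G.Adj u v then (1:ℝ) else 0)) -
        (∑ u ∈ t, (deg G u : ℝ)) * (∑ v ∈ t, (deg G v : ℝ)) / (2 * (edgeCount G : ℝ))) := by
  rw [Qmod]
  congr 1
  calc ∑ u : V, ∑ v : V,
      ((if G.Adj u v then (1 : ℝ) else 0) -
          (deg G u : ℝ) * (deg G v : ℝ) / (2 * (edgeCount G : ℝ))) *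
        (if ∃ t ∈ P.parts, u ∈ t ∧ v ∈ t then (1 : ℝ) else 0)
      = ∑ u : V, ∑ v : V, ∑ t ∈ P.parts,
          ((if G.Adj u v then (1 : ℝ) else 0) -
            (deg G u : ℝ) * (deg G v : ℝ) / (2 * (edgeCount G : ℝ))) *
          ((if u ∈ t then (1:ℝ) else 0) * (if v ∈ t then 1 else 0)) := by
        simp only [delta_eq P, Finset.mul_sum]
    _ = ∑ t ∈ P.parts, ∑ u : V, ∑ v : V,
          ((if G.Adj u v then (1 : ℝ) else 0) -
            (deg G u : ℝ) * (deg G v : ℝ) / (2 * (edgeCount G : ℝ))) *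
          ((if u ∈ t then (1:ℝ) else 0) * (if v ∈ t then 1 else 0)) := by
        rw [show (∑ u : V, ∑ v : V, ∑ t ∈ P.parts,
          ((if G.Adj u v then (1 : ℝ) else 0) -
            (deg G u : ℝ) * (deg G v : ℝ) / (2 * (edgeCount G : ℝ))) *
          ((if u ∈ t then (1:ℝ) else 0) * (if v ∈ t then 1 else 0)))
          = ∑ u : V, ∑ t ∈ P.parts, ∑ v : V,
          ((if G.Adj u v then (1 : ℝ) else 0) -
            (deg G u : ℝ) * (deg G v : ℝ) / (2 * (edgeCount G : ℝ))) *
          ((if u ∈ t then (1:ℝ) else 0) * (if v ∈ t then 1 else 0))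
          from Finset.sum_congr rfl fun u _ => Finset.sum_comm]
        exact Finset.sum_comm
    _ = ∑ t ∈ P.parts,
          ((∑ u ∈ t, ∑ v ∈ t, (if G.Adj u v then (1:ℝ) else 0)) -
            (∑ u ∈ t, (deg G u : ℝ)) * (∑ v ∈ t, (deg G v : ℝ)) / (2 * (edgeCount G : ℝ))) := by
        refine Finset.sum_congr rfl fun t _ => ?_
        have h1 : ∀ u : V, ∑ v : V,
            ((if G.Adj u v then (1 : ℝ) else 0) -
              (deg G u : ℝ) * (deg G v : ℝ) / (2 * (edgeCount G : ℝ))) *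
            ((if u ∈ t then (1:ℝ) else 0) * (if v ∈ t then 1 else 0))
            = (if u ∈ t then (1:ℝ) else 0) * ∑ v : V, (if v ∈ t then (1:ℝ) else 0) *
                ((if G.Adj u v then (1 : ℝ) else 0) -
                  (deg G u : ℝ) * (deg G v : ℝ) / (2 * (edgeCount G : ℝ))) := by
          intro u
          rw [Finset.mul_sum]
          exact Finset.sum_congr rfl fun v _ => by ring
        simp only [h1, indicator_sum]
        simp only [Finset.sum_sub_distrib]
        congr 1
        rw [Finset.sum_mul, Finset.sum_div]
        refine Finset.sum_congr rfl fun u _ => ?_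
        rw [Finset.mul_sum, Finset.sum_div]


lemma key_ineq {ι : Type*} (s : Finset ι) (Et Dt : ι → ℝ) (S : ℝ) (hS : 0 < S)
    (hEt0 : ∀ t ∈ s, 0 ≤ Et t) (hED : ∀ t ∈ s, Et t ≤ Dt t)
    (hDsum : ∑ t ∈ s, Dt t = S)
    (hOhalf : ∀ t ∈ s, 2 * (Dt t - Et t) ≤ ∑ r ∈ s, (Dt r - Et r)) :
    -(1/2) ≤ (1/S) * ∑ t ∈ s, (Et t - Dt t * Dt t / S) ∧
      (1/S) * ∑ t ∈ s, (Et t - Dt t * Dt t / S) ≤ 1 := by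
  set E := ∑ t ∈ s, Et t with hE
  set F := ∑ t ∈ s, (Dt t - Et t) with hF
  have hE0 : 0 ≤ E := Finset.sum_nonneg hEt0
  have hF0 : 0 ≤ F := Finset.sum_nonneg fun t ht => by linarith [hED t ht]
  have hEF : E + F = S := by
    rw [hE, hF, ← Finset.sum_add_distrib, ← hDsum]
    exact Finset.sum_congr rfl fun t _ => by ring
  have hDt0 : ∀ t ∈ s, 0 ≤ Dt t := fun t ht => le_trans (hEt0 t ht) (hED t ht)
  have hDtS : ∀ t ∈ s, Dt t ≤ S := fun t ht => hDsum ▸ Finset.single_le_sum hDt0 ht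
  have hsq : ∑ t ∈ s, Dt t * Dt t ≤ S * E + F/2 * (E + F) := by
    have hterm : ∀ t ∈ s, Dt t * Dt t ≤ S * Et t + F/2 * (Et t + (Dt t - Et t)) := by
      intro t ht
      have h1 := hED t ht; have h2 := hEt0 t ht; have h3 := hDtS t ht
      have h4 := hOhalf t ht
      have o0 : (0:ℝ) ≤ Dt t - Et t := by linarith
      nlinarith [mul_nonneg (sub_nonneg.2 h3) h2,
        mul_nonneg (by linarith : (0:ℝ) ≤ F - 2*(Dt t - Et t)) h2,
        mul_nonneg (by linarith : (0:ℝ) ≤ F - 2*(Dt t - Et t)) o0]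
    calc ∑ t ∈ s, Dt t * Dt t
        ≤ ∑ t ∈ s, (S * Et t + F/2 * (Et t + (Dt t - Et t))) := Finset.sum_le_sum hterm
      _ = S * E + F/2 * (E + F) := by
          rw [Finset.sum_add_distrib, ← Finset.mul_sum, ← Finset.mul_sum,
            Finset.sum_add_distrib, ← hE, ← hF]
  have hX : ∑ t ∈ s, (Et t - Dt t * Dt t / S) = E - (∑ t ∈ s, Dt t * Dt t) / S := by
    rw [Finset.sum_sub_distrib, ← hE, Finset.sum_div]
  have hXlow : -(S/2) ≤ ∑ t ∈ s, (Et t - Dt t * Dt t / S) := by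
    rw [hX]
    have h5 : (∑ t ∈ s, Dt t * Dt t) / S ≤ (S * E + F/2 * S) / S := by
      exact (div_le_div_iff_of_pos_right hS).mpr (hEF ▸ hsq)
    have h6 : (S * E + F/2 * S) / S = E + F/2 := by field_simp
    rw [h6] at h5
    linarith
  have hXhigh : ∑ t ∈ s, (Et t - Dt t * Dt t / S) ≤ S := by
    have : ∑ t ∈ s, (Et t - Dt t * Dt t / S) ≤ ∑ t ∈ s, Et t :=
      Finset.sum_le_sum fun t ht => by
        have : 0 ≤ Dt t * Dt t / S := div_nonneg (mul_self_nonneg _) hS.le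
        linarith
    calc _ ≤ E := this
      _ ≤ S := by linarith
  constructor
  · rw [one_div_mul_eq_div, le_div_iff₀ hS]
    linarith
  · rw [one_div_mul_eq_div, div_le_one hS]
    exact hXhigh

/-- For every finite simple graph `G` with `m ≥ 1` edges and every partition `P` of its
vertex set, the modularity satisfies `−1/2 ≤ Q(P) ≤ 1`. -/
theorem modularity_bounds (G : SimpleGraph V) (hm : 1 ≤ edgeCount G)
    (P : Finpartition (Finset.univ : Finset V)) :
    -(1 / 2) ≤ Qmod G P ∧ Qmod G P ≤ 1 := by
  have hS : (0:ℝ) < 2 * (edgeCount G : ℝ) := by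
    have h1 : (1:ℝ) ≤ (edgeCount G : ℝ) := by exact_mod_cast hm
    linarith
  have hq : Qmod G P = (1 / (2 * (edgeCount G : ℝ))) *
      ∑ t ∈ P.parts, (Ein G t - Dsum G t * Dsum G t / (2 * (edgeCount G : ℝ))) := by
    rw [Qmod_eq]
    simp only [Ein, Dsum, Aw]
  rw [hq]
  exact key_ineq P.parts (Ein G) (Dsum G) _ hS
    (fun t _ => Ein_nonneg G t) (fun t _ => Ein_le_Dsum G t)
    (Dsum_total G P)
    (fun t ht => by
      have h := Eout_half G P ht
      simpa [Eout] using h)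


end HCSPaper
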